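/- Let a be a Barker sequence of even length n ≥ 4. Then a is weak symmetric, and C_k(a) = −a_k a_{n+1−k} for every odd k with 1 ≤ k < n. -/

import Mathlib

/-!
Write `y_j = a_j a_{n+1-j}`. Since `a_j ^ 2 = 1`, the product of the `n - k` terms of `C_k` equals
`y_1 ⋯ y_k`, and for `±1` terms the sum determines the product: it is `(-1)^B` where
`C_k = (n - k) - 2B`. When `n - k` is even the Barker condition forces `C_k = 0`, so
`y_1 ⋯ y_k = (-1)^{(n-k)/2}`; comparing `k = 2` with `k = n - 2` gives `4 ∣ n`, and then two
consecutive even `k` give `y_j y_{j+1} = -1` for odd `j`, which is weak symmetry. When `n - k` is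
odd, `C_k = ±1` and the same count gives `C_k = -y_k`.
-/

/-- The `k`th aperiodic autocorrelation of the sequence `a` of length `n`:
`C_k(a) = ∑_{j=1}^{n-k} a_j a_{j+k}`. -/
def aperiodicCorr (a : ℕ → ℤ) (n k : ℕ) : ℤ :=
  ∑ j ∈ Finset.Icc 1 (n - k), a j * a (j + k)

open Finset

section SignFamily

variable {ι : Type*} {s : Finset ι} {t : ι → ℤ}

theorem exists_sum_eq_card_sub_two_mul_and_prod_eq_neg_one_pow
    (ht : ∀ i ∈ s, t i = 1 ∨ t i = -1) :
    ∃ B : ℕ, ∑ i ∈ s, t i = #s - 2 * B ∧ ∏ i ∈ s, t i = (-1) ^ B := by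
  classical
  induction s using Finset.induction_on with
  | empty => exact ⟨0, by simp⟩
  | insert x s hx ih =>
    obtain ⟨B, hsum, hprod⟩ := ih fun i hi => ht i (mem_insert_of_mem hi)
    rw [sum_insert hx, prod_insert hx, card_insert_of_notMem hx, hsum, hprod]
    rcases ht x (mem_insert_self x s) with h | h <;> rw [h]
    · exact ⟨B, by push_cast; ring, one_mul _⟩
    · exact ⟨B + 1, by push_cast; ring, by ring⟩

theorem prod_eq_neg_one_pow_of_card_eq_two_mul {e : ℕ}
    (ht : ∀ i ∈ s, t i = 1 ∨ t i = -1) (hcard : #s = 2 * e)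
    (hsum : ∑ i ∈ s, t i ∈ ({-1, 0, 1} : Set ℤ)) :
    ∏ i ∈ s, t i = (-1) ^ e := by
  obtain ⟨B, hs, hp⟩ := exists_sum_eq_card_sub_two_mul_and_prod_eq_neg_one_pow ht
  rw [hcard] at hs
  simp only [Set.mem_insert_iff, Set.mem_singleton_iff] at hsum
  obtain rfl : B = e := by rcases hsum with h | h | h <;> rw [h] at hs <;> omega
  exact hp

theorem prod_eq_sum_mul_neg_one_pow_of_card_eq_two_mul_add_one {e : ℕ}
    (ht : ∀ i ∈ s, t i = 1 ∨ t i = -1) (hcard : #s = 2 * e + 1)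
    (hsum : ∑ i ∈ s, t i ∈ ({-1, 0, 1} : Set ℤ)) :
    ∏ i ∈ s, t i = (∑ i ∈ s, t i) * (-1) ^ e := by
  obtain ⟨B, hs, hp⟩ := exists_sum_eq_card_sub_two_mul_and_prod_eq_neg_one_pow ht
  rw [hcard] at hs
  simp only [Set.mem_insert_iff, Set.mem_singleton_iff] at hsum
  rcases hsum with h | h | h <;> rw [h] at hs ⊢
  · obtain rfl : B = e + 1 := by omega
    rw [hp]; ring
  · omega
  · obtain rfl : B = e := by omega
    rw [hp, one_mul]

end SignFamily

def IsBinarySeq (a : ℕ → ℤ) (n : ℕ) : Prop :=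
  ∀ j, 1 ≤ j → j ≤ n → a j = 1 ∨ a j = -1

def IsBarker (a : ℕ → ℤ) (n : ℕ) : Prop :=
  IsBinarySeq a n ∧ ∀ k, 1 ≤ k → k ≤ n - 1 → aperiodicCorr a n k ∈ ({-1, 0, 1} : Set ℤ)

def IsWeakSymmetric (a : ℕ → ℤ) (n : ℕ) : Prop :=
  4 ∣ n ∧ ∀ j, Odd j → 1 ≤ j → j < n / 2 → a j * a (j + 1) = -(a (n + 1 - j) * a (n - j))

def mirrorProd (a : ℕ → ℤ) (n k : ℕ) : ℤ :=
  ∏ j ∈ Icc 1 k, a j * a (n + 1 - j)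

theorem mirrorProd_zero (a : ℕ → ℤ) (n : ℕ) : mirrorProd a n 0 = 1 := rfl

theorem mirrorProd_succ (a : ℕ → ℤ) (n k : ℕ) :
    mirrorProd a n (k + 1) = mirrorProd a n k * (a (k + 1) * a (n - k)) := by
  rw [mirrorProd, prod_Icc_succ_top (Nat.le_add_left 1 k), Nat.add_sub_add_right, mirrorProd]

theorem prod_Icc_one_mul_prod_Icc_succ {M : Type*} [CommMonoid M] (f : ℕ → M) {m n : ℕ}
    (h : m ≤ n) :
    (∏ j ∈ Icc 1 m, f j) * ∏ j ∈ Icc (m + 1) n, f j = ∏ j ∈ Icc 1 n, f j := by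
  simpa [← Icc_add_one_left_eq_Ioc] using prod_Ioc_consecutive f (Nat.zero_le m) h

namespace IsBinarySeq

variable {a : ℕ → ℤ} {n : ℕ}

theorem mul_self_eq_one (ha : IsBinarySeq a n) {j : ℕ} (h1 : 1 ≤ j) (hn : j ≤ n) :
    a j * a j = 1 := by
  rcases ha j h1 hn with h | h <;> rw [h] <;> norm_num

theorem mul_eq_one_or_eq_neg_one (ha : IsBinarySeq a n) {i j : ℕ} (hi : 1 ≤ i) (hin : i ≤ n)
    (hj : 1 ≤ j) (hjn : j ≤ n) : a i * a j = 1 ∨ a i * a j = -1 := by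
  rcases ha i hi hin with h | h <;> rcases ha j hj hjn with h' | h' <;> simp [h, h']

theorem prod_Icc_mul_self_eq_one (ha : IsBinarySeq a n) {u v : ℕ} (hu : 1 ≤ u) (hv : v ≤ n) :
    (∏ j ∈ Icc u v, a j) * ∏ j ∈ Icc u v, a j = 1 := by
  rw [← prod_mul_distrib]
  exact prod_eq_one fun j hj => ha.mul_self_eq_one (hu.trans (mem_Icc.1 hj).1)
    ((mem_Icc.1 hj).2.trans hv)

/-- Since `a_j ^ 2 = 1`, each of `∏_{j ≤ n-k} a_j` and `∏_{k < j ≤ n} a_j` is `∏_{j ≤ n} a_j` times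
the product over the complementary end of length `k`. -/
theorem prod_mul_shift_eq_mirrorProd (ha : IsBinarySeq a n) {k : ℕ} (hk : k ≤ n) :
    ∏ j ∈ Icc 1 (n - k), a j * a (j + k) = mirrorProd a n k := by
  have shift : ∏ j ∈ Icc 1 (n - k), a (j + k) = ∏ j ∈ Icc (k + 1) n, a j := by
    refine prod_nbij' (· + k) (· - k) ?_ ?_ ?_ ?_ fun _ _ => rfl <;>
      intro j hj <;> simp only [mem_Icc] at hj ⊢ <;> omega
  have mirror : ∏ j ∈ Icc 1 k, a (n + 1 - j) = ∏ j ∈ Icc (n - k + 1) n, a j := by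
    refine prod_nbij' (fun j => n + 1 - j) (fun j => n + 1 - j) ?_ ?_ ?_ ?_ fun _ _ => rfl <;>
      intro j hj <;> simp only [mem_Icc] at hj ⊢ <;> omega
  have hsplit₁ := prod_Icc_one_mul_prod_Icc_succ a (Nat.sub_le n k)
  have hsplit₂ := prod_Icc_one_mul_prod_Icc_succ a hk
  have hsq₁ := ha.prod_Icc_mul_self_eq_one (u := n - k + 1) (Nat.le_add_left 1 _) le_rfl
  have hsq₂ := ha.prod_Icc_mul_self_eq_one (u := k + 1) (Nat.le_add_left 1 _) le_rfl
  rw [mirrorProd, prod_mul_distrib, prod_mul_distrib, shift, mirror]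
  linear_combination
    (∏ j ∈ Icc (k + 1) n, a j) * (∏ j ∈ Icc (n - k + 1) n, a j) * (hsplit₁ - hsplit₂)
    - (∏ j ∈ Icc 1 (n - k), a j) * (∏ j ∈ Icc (k + 1) n, a j) * hsq₁
    + (∏ j ∈ Icc 1 k, a j) * (∏ j ∈ Icc (n - k + 1) n, a j) * hsq₂

end IsBinarySeq

namespace IsBarker

variable {a : ℕ → ℤ} {n : ℕ}

theorem mirrorProd_eq_neg_one_pow (h : IsBarker a n) {k e : ℕ} (hk : 1 ≤ k) (hkn : k ≤ n - 1)
    (he : n - k = 2 * e) : mirrorProd a n k = (-1) ^ e := by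
  rw [← h.1.prod_mul_shift_eq_mirrorProd (by omega)]
  refine prod_eq_neg_one_pow_of_card_eq_two_mul (fun j hj => ?_) (by simp [he]) (h.2 k hk hkn)
  rw [mem_Icc] at hj
  exact h.1.mul_eq_one_or_eq_neg_one hj.1 (by omega) (by omega) (by omega)

theorem mirrorProd_eq_aperiodicCorr_mul_neg_one_pow (h : IsBarker a n) {k e : ℕ} (hk : 1 ≤ k)
    (hkn : k ≤ n - 1) (he : n - k = 2 * e + 1) :
    mirrorProd a n k = aperiodicCorr a n k * (-1) ^ e := by
  rw [← h.1.prod_mul_shift_eq_mirrorProd (by omega)]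
  refine prod_eq_sum_mul_neg_one_pow_of_card_eq_two_mul_add_one (fun j hj => ?_) (by simp [he])
    (h.2 k hk hkn)
  rw [mem_Icc] at hj
  exact h.1.mul_eq_one_or_eq_neg_one hj.1 (by omega) (by omega) (by omega)

/-- Comparing `C_2` with `C_{n-2}`: both products `a₁ a₂ aₙ₋₁ aₙ` must be `(-1)^{(n-2)/2} = -1`. -/
theorem four_dvd (h : IsBarker a n) (hn : 4 ≤ n) (heven : Even n) : 4 ∣ n := by
  obtain ⟨m, rfl⟩ := heven
  have h2 := h.mirrorProd_eq_neg_one_pow (k := 2) (e := m - 1) (by omega) (by omega) (by omega)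
  have hn2 := h.mirrorProd_eq_neg_one_pow (k := m + m - 2) (e := 1) (by omega) (by omega)
    (by omega)
  rw [← h.1.prod_mul_shift_eq_mirrorProd (by omega), show m + m - (m + m - 2) = 2 by omega,
    show Icc 1 2 = {1, 2} by rfl, prod_pair (by norm_num),
    show 1 + (m + m - 2) = m + m - 1 by omega,
    show 2 + (m + m - 2) = m + m by omega] at hn2
  rw [mirrorProd, show Icc 1 2 = {1, 2} by rfl, prod_pair (by norm_num),
    show m + m + 1 - 1 = m + m by omega, show m + m + 1 - 2 = m + m - 1 by omega] at h2
  have hodd : (-1 : ℤ) ^ (m - 1) = -1 := by linear_combination -h2 + hn2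
  obtain ⟨r, hr⟩ := (neg_one_pow_eq_neg_one_iff_odd (by norm_num)).1 hodd
  exact ⟨r + 1, by omega⟩

theorem mirrorProd_eq_neg_one_pow_of_four_dvd (h : IsBarker a n) (h4 : 4 ∣ n) {k e : ℕ}
    (hkn : k ≤ n - 1) (he : n - k = 2 * e) : mirrorProd a n k = (-1) ^ e := by
  rcases Nat.eq_zero_or_pos k with rfl | hk
  · rw [mirrorProd_zero]
    exact (Even.neg_one_pow ⟨n / 4, by omega⟩).symm
  · exact h.mirrorProd_eq_neg_one_pow hk hkn he

/-- The mirror products up to `j - 1` and `j + 1` are `(-1)^{e+1}` and `(-1)^e`,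
where `n - j - 1 = 2e`. -/
theorem mirror_mul_mirror_succ_eq_neg_one (h : IsBarker a n) (h4 : 4 ∣ n) {j : ℕ} (hj : Odd j)
    (hjn : j + 2 ≤ n) : a j * a (n + 1 - j) * (a (j + 1) * a (n - j)) = -1 := by
  obtain ⟨i, rfl⟩ := hj
  obtain ⟨e, he⟩ : ∃ e, n - (2 * i + 2) = 2 * e := ⟨(n - (2 * i + 2)) / 2, by omega⟩
  have hprev := h.mirrorProd_eq_neg_one_pow_of_four_dvd h4 (k := 2 * i) (e := e + 1)
    (by omega) (by omega)
  have hnext := h.mirrorProd_eq_neg_one_pow_of_four_dvd h4 (k := 2 * i + 2) (e := e)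
    (by omega) (by omega)
  rw [mirrorProd_succ, mirrorProd_succ, hprev] at hnext
  rw [Nat.add_sub_add_right]
  rcases neg_one_pow_eq_or ℤ e with hs | hs <;> rw [pow_succ, hs] at hnext <;> linarith

theorem isWeakSymmetric (h : IsBarker a n) (h4 : 4 ∣ n) : IsWeakSymmetric a n := by
  refine ⟨h4, fun j hj hj1 hjn => ?_⟩
  have hpair := h.mirror_mul_mirror_succ_eq_neg_one h4 hj (by omega)
  have hsq₁ := h.1.mul_self_eq_one (j := n + 1 - j) (by omega) (by omega)
  have hsq₂ := h.1.mul_self_eq_one (j := n - j) (by omega) (by omega)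
  linear_combination a (n + 1 - j) * a (n - j) * hpair
    - a j * a (j + 1) * a (n - j) * a (n - j) * hsq₁ - a j * a (j + 1) * hsq₂

theorem aperiodicCorr_eq_neg_of_odd (h : IsBarker a n) (h4 : 4 ∣ n) {k : ℕ} (hk : Odd k)
    (hkn : k < n) : aperiodicCorr a n k = -(a k * a (n + 1 - k)) := by
  obtain ⟨i, rfl⟩ := hk
  obtain ⟨e, he⟩ : ∃ e, n - (2 * i + 1) = 2 * e + 1 := ⟨(n - (2 * i + 1)) / 2, by omega⟩
  have hcorr := h.mirrorProd_eq_aperiodicCorr_mul_neg_one_pow (k := 2 * i + 1) (by omega)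
    (by omega) he
  have hprev := h.mirrorProd_eq_neg_one_pow_of_four_dvd h4 (k := 2 * i) (e := e + 1)
    (by omega) (by omega)
  rw [mirrorProd_succ, hprev] at hcorr
  rw [Nat.add_sub_add_right]
  rcases neg_one_pow_eq_or ℤ e with hs | hs <;> rw [pow_succ, hs] at hcorr <;> linarith

end IsBarker

theorem stmt_10 (n : ℕ) (hn : 4 ≤ n) (hne : Even n) (a : ℕ → ℤ)
    (ha : ∀ j, 1 ≤ j → j ≤ n → a j = 1 ∨ a j = -1)
    (hbarker : ∀ k, 1 ≤ k → k ≤ n - 1 → aperiodicCorr a n k ∈ ({-1, 0, 1} : Set ℤ)) :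
    -- `a` is weak symmetric:
    (4 ∣ n ∧ ∀ j, Odd j → 1 ≤ j → j < n / 2 →
      a j * a (j + 1) = -(a (n + 1 - j) * a (n - j))) ∧
    -- and `C_k = -a_k a_{n+1-k}` for odd `k`:
    (∀ k, Odd k → 1 ≤ k → k < n →
      aperiodicCorr a n k = -(a k * a (n + 1 - k))) := by
  have hB : IsBarker a n := ⟨ha, hbarker⟩
  have h4 := hB.four_dvd hn hne
  exact ⟨hB.isWeakSymmetric h4, fun k hk _ hkn => hB.aperiodicCorr_eq_neg_of_odd h4 hk hkn⟩
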